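/- Let α ∈ (0,1), τ > 0, λ ∈ ℂ. The generalized Mittag-Leffler function E^{λ,τ}_{α,1} is continuous on [0,∞): on each interval [kτ, (k+1)τ) it is given by the finite sum ∑_{j=0}^{k} λ^j (t − jτ)^{αj}/Γ(αj+1), and the one-sided limits at the points kτ agree. -/
import Mathlib


/-- Heaviside function. -/
noncomputable def Heaviside (s : ℝ) : ℝ := if 0 ≤ s then 1 else 0

/-- Generalized Mittag-Leffler function `E^{λ,τ}_{α,1}`. -/
noncomputable def genML1 (α τ : ℝ) (lam : ℂ) (t : ℝ) : ℂ :=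
  ∑' k : ℕ, lam ^ k * (((t - k * τ) ^ (α * k) * Heaviside (t - k * τ)
      / Real.Gamma (α * k + 1) : ℝ) : ℂ)

lemma rpow_mul_heaviside (c : ℝ) (hc : 0 < c) (s : ℝ) :
    s ^ c * Heaviside s = (max s 0) ^ c := by
  unfold Heaviside
  rcases le_or_gt 0 s with h | h
  · rw [if_pos h, max_eq_left h, mul_one]
  · rw [if_neg (not_le.mpr h), max_eq_right h.le, mul_zero,
      Real.zero_rpow hc.ne']

lemma genML1_eq_partial (α τ : ℝ) (lam : ℂ) (hτ : 0 < τ) (N : ℕ) (t : ℝ)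
    (ht : t < ((N : ℝ) + 1) * τ) :
    genML1 α τ lam t = ∑ j ∈ Finset.range (N + 1),
      lam ^ j * (((t - j * τ) ^ (α * j) * Heaviside (t - j * τ)
        / Real.Gamma (α * j + 1) : ℝ) : ℂ) := by
  unfold genML1
  apply tsum_eq_sum
  intro j hj
  have hj' : N + 1 ≤ j := le_of_not_gt fun h => hj (Finset.mem_range.mpr h)
  have hjr : ((N : ℝ) + 1) ≤ (j : ℝ) := by exact_mod_cast hj'
  have hneg : t - j * τ < 0 := by
    have : ((N : ℝ) + 1) * τ ≤ (j : ℝ) * τ :=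
      mul_le_mul_of_nonneg_right hjr hτ.le
    linarith
  rw [Heaviside, if_neg (not_le.mpr hneg), mul_zero, zero_div,
    Complex.ofReal_zero, mul_zero]

theorem genML1_continuous_and_piecewise (α τ : ℝ) (lam : ℂ)
    (hα : 0 < α) (hα1 : α < 1) (hτ : 0 < τ) :
    ContinuousOn (genML1 α τ lam) (Set.Ici 0) ∧
    ∀ k : ℕ, ∀ t : ℝ, (k : ℝ) * τ ≤ t → t < ((k : ℝ) + 1) * τ →
      genML1 α τ lam t = ∑ j ∈ Finset.range (k + 1),
        lam ^ j * (((t - j * τ) ^ (α * j) / Real.Gamma (α * j + 1) : ℝ) : ℂ) := by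
  constructor
  · -- continuity
    intro t₀ ht₀
    set N : ℕ := Nat.floor (t₀ / τ) with hN
    have htN : t₀ < ((N : ℝ) + 1) * τ := by
      have h1 : t₀ / τ < (N : ℝ) + 1 := Nat.lt_floor_add_one _
      calc t₀ = (t₀ / τ) * τ := by field_simp
        _ < ((N : ℝ) + 1) * τ := by
          exact mul_lt_mul_of_pos_right h1 hτ
    set G : ℝ → ℂ := fun t => ∑ j ∈ Finset.range (N + 1),
      lam ^ j * (((t - j * τ) ^ (α * j) * Heaviside (t - j * τ)
        / Real.Gamma (α * j + 1) : ℝ) : ℂ) with hG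
    have hGc : ContinuousOn G (Set.Ici 0) := by
      apply continuousOn_finset_sum
      intro j _
      rcases Nat.eq_zero_or_pos j with hj0 | hj1
      · subst hj0
        apply (continuousOn_const
          (c := lam ^ 0 * ((1 / Real.Gamma (α * (0:ℕ) + 1) : ℝ) : ℂ))).congr
        intro t ht
        simp only [Nat.cast_zero, zero_mul, mul_zero, sub_zero, Real.rpow_zero,
          one_mul]
        rw [Heaviside, if_pos (Set.mem_Ici.mp ht)]
      · have hc : 0 < α * j := by positivity
        have : Continuous fun t : ℝ =>
            lam ^ j * (((max (t - j * τ) 0) ^ (α * j)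
              / Real.Gamma (α * j + 1) : ℝ) : ℂ) := by
          apply continuous_const.mul
          apply Complex.continuous_ofReal.comp
          apply Continuous.div_const
          apply Continuous.rpow_const
          · exact (continuous_id.sub continuous_const).max continuous_const
          · intro x; exact Or.inr hc.le
        apply this.continuousOn.congr
        intro t _
        simp only [rpow_mul_heaviside _ hc]
    have hev : genML1 α τ lam =ᶠ[nhdsWithin t₀ (Set.Ici 0)] G := by
      have hmem : Set.Iio (((N : ℝ) + 1) * τ) ∈ nhdsWithin t₀ (Set.Ici 0) :=
        nhdsWithin_le_nhds (Iio_mem_nhds htN)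
      filter_upwards [hmem] with t ht
      exact genML1_eq_partial α τ lam hτ N t ht
    exact ((hGc t₀ ht₀).congr_of_eventuallyEq hev
      (genML1_eq_partial α τ lam hτ N t₀ htN))
  · intro k t hkt htk
    rw [genML1_eq_partial α τ lam hτ k t htk]
    apply Finset.sum_congr rfl
    intro j hj
    have hj' : (j : ℝ) ≤ (k : ℝ) := by
      exact_mod_cast Nat.lt_succ_iff.mp (Finset.mem_range.mp hj)
    have hpos : 0 ≤ t - j * τ := by
      have : (j : ℝ) * τ ≤ (k : ℝ) * τ := mul_le_mul_of_nonneg_right hj' hτ.le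
      linarith
    rw [Heaviside, if_pos hpos, mul_one]
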